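/- arXiv:2505.01082 — 4 statements merged into one kernel-verified Lean document; each statement's English description precedes it below -/
import Mathlib

section
/- Assume k < d. Let v_ub ∈ ℝ and let j ∈ {1,…,d} satisfy ŵ_j ≥ ŵ_[k]. If (γ/4)(ŵ_j − ŵ_[k+1]) > v_ub − v_conic, then every β ∈ ℝ^d with ‖β‖₀ ≤ k and β_j = 0 satisfies ℒ(β) + γ‖β‖₂² > v_ub; hence, whenever v_ub is an upper bound of the optimal value of min{ℒ(β) + γ‖β‖₂² : ‖β‖₀ ≤ k}, every optimal solution β* of this problem satisfies β*_j ≠ 0. -/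
open Finset

/-- The `j`-th largest element (1-indexed) of a finite set of reals. -/
noncomputable def nthLargest (s : Finset ℝ) (j : ℕ) : ℝ :=
  (Finset.sort s (· ≤ ·)).getD (s.card - j) 0

/-- `∑_{j=1}^k w_[j]`, the sum of the `k` largest entries of `w`. -/
noncomputable def topSum (d k : ℕ) (w : Fin d → ℝ) : ℝ :=
  ∑ j ∈ Finset.Icc 1 k, nthLargest (Finset.univ.image w) j

/-- Support of a vector, as a finset. -/
noncomputable def suppF {d : ℕ} (x : Fin d → ℝ) : Finset (Fin d) :=
  Finset.univ.filter fun i => x i ≠ 0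


/-- sum of subset bounded by sum over a "top" set -/
lemma aux_sum_le_top (W Top T : Finset ℝ) (hT : T ⊆ W) (hTopW : Top ⊆ W)
    (hcard : T.card ≤ Top.card)
    (hnn : ∀ x ∈ W, 0 ≤ x)
    (hcmp : ∀ x ∈ W, x ∉ Top → ∀ y ∈ Top, x ≤ y) :
    ∑ x ∈ T, x ≤ ∑ x ∈ Top, x := by
  have hdcard : (T \ Top).card ≤ (Top \ T).card := by
    have h1 := Finset.card_sdiff_add_card_inter T Top
    have h2 := Finset.card_sdiff_add_card_inter Top T
    rw [Finset.inter_comm] at h2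
    omega
  have key : ∑ x ∈ T \ Top, x ≤ ∑ x ∈ Top \ T, x := by
    rcases (Top \ T).eq_empty_or_nonempty with he | hne
    · have : T \ Top = ∅ := Finset.card_eq_zero.mp (by
        have := hdcard; rw [he] at this; simpa using this)
      rw [this, he]
    · set c := (Top \ T).min' hne with hc
      have hcTop : c ∈ Top := (Finset.mem_sdiff.mp ((Top \ T).min'_mem hne)).1
      have hc0 : 0 ≤ c := hnn c (hTopW hcTop)
      calc ∑ x ∈ T \ Top, x ≤ (T \ Top).card • c := by
            refine Finset.sum_le_card_nsmul _ id c ?_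
            intro x hx
            rcases Finset.mem_sdiff.mp hx with ⟨hxT, hxTop⟩
            exact hcmp x (hT hxT) hxTop c hcTop
        _ ≤ (Top \ T).card • c := by
            simp only [nsmul_eq_mul]
            exact mul_le_mul_of_nonneg_right (by exact_mod_cast hdcard) hc0
        _ ≤ ∑ x ∈ Top \ T, x := Finset.card_nsmul_le_sum _ id c (fun x hx => (Top \ T).min'_le x hx)
  calc ∑ x ∈ T, x = ∑ x ∈ T ∩ Top, x + ∑ x ∈ T \ Top, x :=
        (Finset.sum_inter_add_sum_sdiff T Top id).symm
    _ ≤ ∑ x ∈ Top ∩ T, x + ∑ x ∈ Top \ T, x := by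
        rw [Finset.inter_comm]; linarith
    _ = ∑ x ∈ Top, x := Finset.sum_inter_add_sum_sdiff Top T id

/-- topSum as sum over the toFinset of the dropped tail, for any m ≤ card. -/
lemma aux_topSum_drop (W : Finset ℝ) (m : ℕ) (hm : m ≤ W.card) :
    ∑ j ∈ Finset.Icc 1 m, nthLargest W j = ((Finset.sort W (· ≤ ·)).drop (W.card - m)).sum := by
  set l := Finset.sort W (· ≤ ·) with hl
  have hlen : l.length = W.card := Finset.length_sort _
  induction m with
  | zero => simp [Nat.sub_zero, ← hlen, List.drop_length]
  | succ n ih =>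
    have hn : n ≤ W.card := le_of_lt (Nat.lt_of_lt_of_le (Nat.lt_succ_self n) hm)
    rw [Finset.sum_Icc_succ_top (by omega : 1 ≤ n + 1), ih hn]
    have hidx : W.card - (n + 1) < l.length := by omega
    rw [nthLargest]
    have hdrop : l.drop (W.card - (n+1)) = l[W.card - (n+1)] :: l.drop (W.card - (n+1) + 1) :=
      List.drop_eq_getElem_cons hidx
    have : W.card - (n+1) + 1 = W.card - n := by omega
    rw [this] at hdrop
    rw [hdrop, List.sum_cons]
    have : l.getD (W.card - (n+1)) 0 = l[W.card - (n+1)] := List.getD_eq_getElem l 0 hidx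
    rw [← hl, this]
    ring

/-- Any subset of W with card ≤ m has sum ≤ sum of m largest, given nonneg. -/
lemma aux_subset_le_topSum (W : Finset ℝ) (T : Finset ℝ) (m : ℕ)
    (hT : T ⊆ W) (hcard : T.card ≤ m) (hm : m ≤ W.card)
    (hnn : ∀ x ∈ W, 0 ≤ x) :
    ∑ x ∈ T, x ≤ ∑ j ∈ Finset.Icc 1 m, nthLargest W j := by
  set l := Finset.sort W (· ≤ ·) with hl
  have hlen : l.length = W.card := Finset.length_sort _
  have hnodup : l.Nodup := W.sort_nodup _
  have hsorted : l.Pairwise (· ≤ ·) := W.pairwise_sort _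
  have hsplit : l = l.take (W.card - m) ++ l.drop (W.card - m) := (List.take_append_drop _ l).symm
  set tl := l.drop (W.card - m) with htl
  have htlnodup : tl.Nodup := hnodup.sublist (List.drop_sublist _ _)
  set Top := tl.toFinset with hTop
  have hsumTop : ∑ x ∈ Top, x = tl.sum := by
    rw [hTop, List.sum_toFinset _ htlnodup]; simp
  have hTopcard : Top.card = m := by
    rw [hTop, List.toFinset_card_of_nodup htlnodup, htl, List.length_drop, hlen]; omega
  have hmemW : ∀ x, x ∈ l ↔ x ∈ W := fun x => Finset.mem_sort _
  have hTopW : Top ⊆ W := by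
    intro x hx
    rw [hTop, List.mem_toFinset] at hx
    exact (hmemW x).mp (List.mem_of_mem_drop hx)
  have hcmp : ∀ x ∈ W, x ∉ Top → ∀ y ∈ Top, x ≤ y := by
    intro x hxW hxTop y hyTop
    have hxl : x ∈ l := (hmemW x).mpr hxW
    have hxtake : x ∈ l.take (W.card - m) := by
      rcases (List.mem_append.mp (hsplit ▸ hxl)) with h | h
      · exact h
      · exact absurd (List.mem_toFinset.mpr h) hxTop
    have hytl : y ∈ tl := List.mem_toFinset.mp hyTop
    have := hsorted
    rw [hsplit, List.pairwise_append] at this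
    exact this.2.2 x hxtake y hytl
  rw [aux_topSum_drop W m hm, ← hl, ← htl, ← hsumTop]
  exact aux_sum_le_top W Top T hT hTopW (hTopcard ▸ hcard) hnn hcmp

theorem stmt_3 (d k : ℕ) (hk1 : 1 ≤ k) (hkd : k < d) (γ : ℝ) (hγ : 0 < γ)
    (L : (Fin d → ℝ) → ℝ) (hL : ConvexOn ℝ Set.univ L)
    (p : Fin d → ℝ) (hdist : Function.Injective fun i => (p i) ^ 2)
    (βhat : Fin d → ℝ)
    (hmin : ∀ β : Fin d → ℝ,
      L βhat + γ * ∑ i, p i * βhat i ≤ L β + γ * ∑ i, p i * β i)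
    (vub : ℝ) (j : Fin d)
    (hj : nthLargest (Finset.univ.image fun i => (p i) ^ 2) k ≤ (p j) ^ 2)
    (hineq : (γ / 4) * ((p j) ^ 2 - nthLargest (Finset.univ.image fun i => (p i) ^ 2) (k + 1))
      > vub - (L βhat + γ * ∑ i, p i * βhat i
          - (γ / 4) * topSum d k (fun i => (p i) ^ 2))) :
    (∀ β : Fin d → ℝ, (suppF β).card ≤ k → β j = 0 →
      L β + γ * ∑ i, (β i) ^ 2 > vub) ∧
    (∀ βstar : Fin d → ℝ, (suppF βstar).card ≤ k →
      (∀ β' : Fin d → ℝ, (suppF β').card ≤ k →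
        L βstar + γ * ∑ i, (βstar i) ^ 2 ≤ L β' + γ * ∑ i, (β' i) ^ 2) →
      L βstar + γ * ∑ i, (βstar i) ^ 2 ≤ vub → βstar j ≠ 0) := by
  set w : Fin d → ℝ := fun i => (p i) ^ 2 with hw
  set W : Finset ℝ := Finset.univ.image w with hW
  have hWcard : W.card = d := by
    rw [hW, Finset.card_image_of_injective _ hdist, Finset.card_univ, Fintype.card_fin]
  have hnn : ∀ x ∈ W, 0 ≤ x := by
    intro x hx
    rcases Finset.mem_image.mp hx with ⟨i, _, rfl⟩
    positivity
  have main : ∀ β : Fin d → ℝ, (suppF β).card ≤ k → β j = 0 →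
      L β + γ * ∑ i, (β i) ^ 2 > vub := by
    intro β hsupp hβj
    set S := suppF β with hS
    have hjS : j ∉ S := by simp [hS, suppF, hβj]
    -- Step: pointwise lower bound
    have hstep1 : ∑ i, (β i) ^ 2 ≥ ∑ i, p i * β i - (1/4) * ∑ i ∈ S, w i := by
      have hzero : ∀ i ∈ Finset.univ, i ∉ S → (β i) ^ 2 - p i * β i = 0 := by
        intro i _ hi
        have : β i = 0 := by
          by_contra h
          exact hi (by simp [hS, suppF, h])
        simp [this]
      have hsum : ∑ i, ((β i) ^ 2 - p i * β i) = ∑ i ∈ S, ((β i) ^ 2 - p i * β i) :=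
        (Finset.sum_subset (Finset.subset_univ S) hzero).symm
      have hterm : ∀ i ∈ S, -(1/4) * w i ≤ (β i) ^ 2 - p i * β i := by
        intro i _
        have : 0 ≤ (β i - p i / 2) ^ 2 := sq_nonneg _
        simp only [hw]; nlinarith
      have := Finset.sum_le_sum hterm
      rw [← hsum] at this
      have hexp : ∑ i, ((β i) ^ 2 - p i * β i) = ∑ i, (β i) ^ 2 - ∑ i, p i * β i := by
        rw [Finset.sum_sub_distrib]
      rw [hexp] at this
      have : ∑ i ∈ S, -(1/4) * w i = -(1/4) * ∑ i ∈ S, w i := by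
        rw [Finset.mul_sum]
      linarith [Finset.sum_le_sum hterm, this]
    -- Step: sum over S plus w j bounded by topSum (k+1)
    have hcomb : ∑ i ∈ S, w i + w j ≤ ∑ m ∈ Finset.Icc 1 (k+1), nthLargest W m := by
      set T : Finset ℝ := (insert j S).image w with hT
      have hTW : T ⊆ W := by
        intro x hx
        rcases Finset.mem_image.mp hx with ⟨i, _, rfl⟩
        exact Finset.mem_image.mpr ⟨i, Finset.mem_univ i, rfl⟩
      have hTcard : T.card ≤ k + 1 := by
        calc T.card ≤ (insert j S).card := Finset.card_image_le
          _ ≤ S.card + 1 := Finset.card_insert_le _ _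
          _ ≤ k + 1 := by omega
      have hTsum : ∑ x ∈ T, x = ∑ i ∈ insert j S, w i := by
        rw [hT, Finset.sum_image (fun a _ b _ h => hdist h)]
      have : ∑ i ∈ insert j S, w i = w j + ∑ i ∈ S, w i := Finset.sum_insert hjS
      have hfin := aux_subset_le_topSum W T (k+1) hTW hTcard (by omega) hnn
      rw [hTsum, this] at hfin
      linarith
    have hsplit : ∑ m ∈ Finset.Icc 1 (k+1), nthLargest W m
        = topSum d k w + nthLargest W (k+1) := by
      rw [Finset.sum_Icc_succ_top (by omega : 1 ≤ k + 1)]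
      rfl
    rw [hsplit] at hcomb
    have hV := hmin β
    have hmul : (γ/4) * (∑ i ∈ S, w i) ≤ (γ/4) * (topSum d k w + nthLargest W (k+1) - w j) :=
      mul_le_mul_of_nonneg_left (by linarith) (by linarith)
    have hγ4 : (0:ℝ) < γ / 4 := by linarith
    have hstep1' : γ * ∑ i, (β i) ^ 2 ≥ γ * ∑ i, p i * β i - (γ/4) * ∑ i ∈ S, w i := by
      have := mul_le_mul_of_nonneg_left hstep1 (le_of_lt hγ)
      nlinarith [hstep1]
    have hineq' : (γ / 4) * (w j - nthLargest W (k + 1))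
        > vub - (L βhat + γ * ∑ i, p i * βhat i - (γ / 4) * topSum d k w) := hineq
    nlinarith [hV, hstep1', hmul, hineq']
  refine ⟨main, ?_⟩
  intro βstar hs hopt hle hzero
  exact absurd hle (not_le.mpr (main βstar hs hzero))
end

section
/- Let t ∈ ℝ and let (S, N, C) be a valid SCG-tuple with threshold t such that |N| > d − k. Then (S, N, C) is a minimal SCG-tuple if and only if S = ∅. -/
open Finset

/-- A valid SCG-tuple with threshold `t`: (1) `S, N, C` pairwise disjoint with
`|C| = min (k − |S|) (d − |N| − |S|)`; (2) if `C ≠ ∅` then every index `i` with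
`w i ≥ min_{j∈C} w j` lies in `S ∪ N ∪ C`; (3) `∑_{j=1}^k w_[j] − ∑_S w − ∑_C w > t`. -/
def ValidSCG (d k : ℕ) (w : Fin d → ℝ) (t : ℝ) (S N C : Finset (Fin d)) : Prop :=
  (Disjoint S N ∧ Disjoint S C ∧ Disjoint N C) ∧
  C.card = min (k - S.card) (d - N.card - S.card) ∧
  (∀ (hC : C.Nonempty), ∀ i, C.inf' hC w ≤ w i → i ∈ S ∪ N ∪ C) ∧
  topSum d k w - ∑ i ∈ S, w i - ∑ i ∈ C, w i > t

/-- A minimal SCG-tuple: a valid SCG-tuple such that (a) `N = ∅` or removing any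
index from `N` breaks validity, and (b) `S = ∅` or moving any index of `S` into `C`
breaks validity. -/
def MinimalSCG (d k : ℕ) (w : Fin d → ℝ) (t : ℝ) (S N C : Finset (Fin d)) : Prop :=
  ValidSCG d k w t S N C ∧
  (N = ∅ ∨ ∀ i ∈ N, ¬ ValidSCG d k w t S (N.erase i) C) ∧
  (S = ∅ ∨ ∀ i ∈ S, ¬ ValidSCG d k w t (S.erase i) N (insert i C))

lemma scg_cards (d k : ℕ) (hkd : k ≤ d) (w : Fin d → ℝ) (t : ℝ)
    (S N C : Finset (Fin d)) (hvalid : ValidSCG d k w t S N C)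
    (hN : d - k < N.card) :
    S.card + N.card ≤ d ∧ C.card = d - N.card - S.card := by
  obtain ⟨⟨hSN, hSC, hNC⟩, hcard, _, _⟩ := hvalid
  have h1 : (S ∪ N).card ≤ d := by
    simpa using Finset.card_le_card (Finset.subset_univ (S ∪ N))
  rw [Finset.card_union_of_disjoint hSN] at h1
  omega

lemma scg_union (d k : ℕ) (hkd : k ≤ d) (w : Fin d → ℝ) (t : ℝ)
    (S N C : Finset (Fin d)) (hvalid : ValidSCG d k w t S N C)
    (hN : d - k < N.card) :
    S ∪ N ∪ C = Finset.univ := by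
  obtain ⟨h1, h2⟩ := scg_cards d k hkd w t S N C hvalid hN
  obtain ⟨⟨hSN, hSC, hNC⟩, hcard, _, _⟩ := hvalid
  apply Finset.eq_univ_of_card
  rw [Finset.card_union_of_disjoint (by rw [Finset.disjoint_union_left]; exact ⟨hSC, hNC⟩),
    Finset.card_union_of_disjoint hSN]
  simp only [Fintype.card_fin]
  omega

theorem stmt_6 (d k : ℕ) (hk1 : 1 ≤ k) (hkd : k ≤ d)
    (w : Fin d → ℝ) (hdist : Function.Injective w) (t : ℝ)
    (S N C : Finset (Fin d)) (hvalid : ValidSCG d k w t S N C)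
    (hN : d - k < N.card) :
    MinimalSCG d k w t S N C ↔ S = ∅ := by
  obtain ⟨hle, hCcard⟩ := scg_cards d k hkd w t S N C hvalid hN
  have huniv := scg_union d k hkd w t S N C hvalid hN
  obtain ⟨⟨hSN, hSC, hNC⟩, hcard, hcond, hsum⟩ := hvalid
  constructor
  · rintro ⟨-, -, hb⟩
    rcases hb with h | h
    · exact h
    by_contra hSne
    obtain ⟨i, hiS⟩ := Finset.nonempty_iff_ne_empty.mpr hSne
    refine h i hiS ?_
    have hiC : i ∉ C := Finset.disjoint_left.mp hSC hiS
    have hiN : i ∉ N := Finset.disjoint_left.mp hSN hiS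
    have hS1 : 1 ≤ S.card := Finset.card_pos.mpr ⟨i, hiS⟩
    refine ⟨⟨?_, ?_, ?_⟩, ?_, ?_, ?_⟩
    · exact Finset.disjoint_of_subset_left (Finset.erase_subset _ _) hSN
    · rw [Finset.disjoint_insert_right]
      exact ⟨Finset.notMem_erase _ _,
        Finset.disjoint_of_subset_left (Finset.erase_subset _ _) hSC⟩
    · rw [Finset.disjoint_insert_right]
      exact ⟨hiN, hNC⟩
    · rw [Finset.card_insert_of_notMem hiC, Finset.card_erase_of_mem hiS]
      omega
    · intro hC j _
      have : S.erase i ∪ N ∪ insert i C = S ∪ N ∪ C := by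
        ext x
        simp only [Finset.mem_union, Finset.mem_erase, Finset.mem_insert]
        by_cases hx : x = i
        · subst hx; tauto
        · tauto
      rw [this, huniv]; exact Finset.mem_univ j
    · have h1 : ∑ x ∈ S.erase i, w x = ∑ x ∈ S, w x - w i := by
        rw [eq_sub_iff_add_eq, Finset.sum_erase_add _ _ hiS]
      have h2 : ∑ x ∈ insert i C, w x = w i + ∑ x ∈ C, w x :=
        Finset.sum_insert hiC
      rw [h1, h2]; linarith
  · intro hS
    refine ⟨⟨⟨hSN, hSC, hNC⟩, hcard, hcond, hsum⟩, ?_, Or.inl hS⟩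
    rcases Finset.eq_empty_or_nonempty N with hNe | hNne
    · exact Or.inl hNe
    right
    intro i hiN hbad
    obtain ⟨-, hbadcard, -, -⟩ := hbad
    rw [Finset.card_erase_of_mem hiN] at hbadcard
    have hN1 : 1 ≤ N.card := Finset.card_pos.mpr ⟨i, hiN⟩
    omega
end

section
/- Let t ∈ ℝ and let (S, N, C) be a valid SCG-tuple with threshold t such that |N| ≤ d − k and C ≠ ∅. Then (S, N, C) is a minimal SCG-tuple if and only if both of the following hold: (a) N = ∅, or min_{i∈N} w_i ≥ min_{i∈C} w_i; and (b) S = ∅, or there exists an index j ∈ {1,…,d} ∖ (S ∪ N ∪ C) such that min_{i∈C} w_i > w_j > max_{i∈S} w_i. -/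
open Finset

section helpers

variable {d : ℕ}

lemma union_shift {S N C : Finset (Fin d)} {i : Fin d} (hi : i ∈ S) :
    (S.erase i) ∪ N ∪ insert i C = S ∪ N ∪ C := by
  ext j
  by_cases h : j = i
  · subst h; simp [hi]
  · simp [Finset.mem_union, Finset.mem_erase, Finset.mem_insert, h]

end helpers

theorem stmt_8 (d k : ℕ) (hk1 : 1 ≤ k) (hkd : k ≤ d)
    (w : Fin d → ℝ) (hdist : Function.Injective w) (t : ℝ)
    (S N C : Finset (Fin d)) (hvalid : ValidSCG d k w t S N C)
    (hN : N.card ≤ d - k) (hC : C.Nonempty) :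
    MinimalSCG d k w t S N C ↔
      ((N = ∅ ∨ ∀ i ∈ N, C.inf' hC w ≤ w i) ∧
       (S = ∅ ∨ ∃ j, j ∉ S ∪ N ∪ C ∧ w j < C.inf' hC w ∧ ∀ i ∈ S, w i < w j)) := by
  obtain ⟨⟨hSN, hSC, hNC⟩, hcard, hcov, hsum⟩ := hvalid
  set m := C.inf' hC w with hm
  have hCpos : 1 ≤ C.card := Finset.card_pos.mpr hC
  have hCk : C.card = k - S.card := by omega
  have hSk : S.card < k := by omega
  constructor
  · rintro ⟨-, ha, hb⟩
    constructor
    · rcases ha with h | h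
      · exact Or.inl h
      · right
        intro i hi
        by_contra hlt
        push_neg at hlt
        apply h i hi
        refine ⟨⟨hSN.mono_right (Finset.erase_subset _ _), hSC,
            hNC.mono_left (Finset.erase_subset _ _)⟩, ?_, ?_, hsum⟩
        · rw [Finset.card_erase_of_mem hi]; omega
        · intro hC' j hj
          have hj' := hcov hC j hj
          have hji : j ≠ i := by rintro rfl; exact absurd hj (not_le.mpr hlt)
          simp only [Finset.mem_union, Finset.mem_erase] at hj' ⊢
          tauto
    · rcases hb with h | h
      · exact Or.inl h
      · by_cases hS : S = ∅
        · exact Or.inl hS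
        right
        obtain ⟨i0, hi0, hi0max⟩ := Finset.exists_max_image S w (Finset.nonempty_iff_ne_empty.mpr hS)
        have hnv := h i0 hi0
        have hi0C : i0 ∉ C := Finset.disjoint_left.mp hSC hi0
        have hi0N : i0 ∉ N := Finset.disjoint_left.mp hSN hi0
        have hdisj' : Disjoint (S.erase i0) N ∧ Disjoint (S.erase i0) (insert i0 C) ∧
            Disjoint N (insert i0 C) := by
          refine ⟨hSN.mono_left (Finset.erase_subset _ _), ?_, ?_⟩
          · rw [Finset.disjoint_insert_right]
            exact ⟨Finset.notMem_erase _ _, hSC.mono_left (Finset.erase_subset _ _)⟩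
          · rw [Finset.disjoint_insert_right]
            exact ⟨hi0N, hNC⟩
        have hcard' : (insert i0 C).card =
            min (k - (S.erase i0).card) (d - N.card - (S.erase i0).card) := by
          rw [Finset.card_insert_of_notMem hi0C, Finset.card_erase_of_mem hi0]
          have hS1 : 1 ≤ S.card := Finset.card_pos.mpr ⟨i0, hi0⟩
          omega
        have hsum' : topSum d k w - ∑ i ∈ S.erase i0, w i - ∑ i ∈ insert i0 C, w i > t := by
          rw [Finset.sum_insert hi0C]
          have := Finset.sum_erase_add S w hi0
          linarith
        have hi0m : w i0 < m := by
          by_contra hge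
          push_neg at hge
          apply hnv
          refine ⟨hdisj', hcard', ?_, hsum'⟩
          intro hC' j hj
          rw [Finset.inf'_insert (H := hC), min_eq_right hge] at hj
          have hj2 : m ≤ w j := hj
          rw [union_shift hi0]
          exact hcov hC j hj2
        have hCc : ¬ (∀ (hC' : (insert i0 C).Nonempty), ∀ j,
            (insert i0 C).inf' hC' w ≤ w j → j ∈ (S.erase i0) ∪ N ∪ insert i0 C) :=
          fun hcc => hnv ⟨hdisj', hcard', hcc, hsum'⟩
        push_neg at hCc
        obtain ⟨hC', j, hj1, hj2⟩ := hCc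
        rw [Finset.inf'_insert (H := hC), min_eq_left (le_of_lt hi0m)] at hj1
        rw [union_shift hi0] at hj2
        have hi0j : w i0 ≤ w j := hj1
        refine ⟨j, hj2, ?_, ?_⟩
        · by_contra hge
          push_neg at hge
          exact hj2 (hcov hC j hge)
        · intro i hi
          have hij : i0 ≠ j := by
            rintro rfl; exact hj2 (by simp [Finset.mem_union, hi0])
          have : w i0 < w j := lt_of_le_of_ne hi0j (fun h => hij (hdist h))
          exact lt_of_le_of_lt (hi0max i hi) this
  · rintro ⟨ha, hb⟩
    refine ⟨⟨⟨hSN, hSC, hNC⟩, hcard, hcov, hsum⟩, ?_, ?_⟩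
    · rcases ha with h | h
      · exact Or.inl h
      · right
        intro i hi hv
        have := hv.2.2.1 hC i (h i hi)
        simp only [Finset.mem_union, Finset.mem_erase] at this
        have hiS : i ∉ S := Finset.disjoint_right.mp hSN hi
        have hiC : i ∉ C := Finset.disjoint_left.mp hNC hi
        tauto
    · rcases hb with h | h
      · exact Or.inl h
      · right
        intro i hi hv
        obtain ⟨j, hj1, hj2, hj3⟩ := h
        have hwi : w i < w j := hj3 i hi
        have hinf : (insert i C).inf' (Finset.insert_nonempty _ _) w ≤ w j := by
          rw [Finset.inf'_insert (H := hC)]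
          exact le_trans (min_le_left _ _) (le_of_lt hwi)
        have := hv.2.2.1 (Finset.insert_nonempty _ _) j hinf
        rw [union_shift hi] at this
        exact hj1 this
end

section
/- Let t ∈ ℝ, let i ∈ {1,…,d} with i ∉ Top_k(w), and suppose that ({i}, ∅, Top_{k−1}(w)) is a valid SCG-tuple with threshold t (equivalently, w_[k] − w_i > t). Then ({i}, ∅, Top_{k−1}(w)) is a minimal SCG-tuple. -/
open Finset

/-- `Top_m(w)`: the set of indices of the `m` largest entries of `w`
(`Top_0(w) := ∅`). -/
noncomputable def topSet (d : ℕ) (w : Fin d → ℝ) (m : ℕ) : Finset (Fin d) :=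
  if m = 0 then ∅
  else Finset.univ.filter fun i => nthLargest (Finset.univ.image w) m ≤ w i


private lemma nth_facts (d k : ℕ) (hk1 : 1 ≤ k) (hkd : k ≤ d)
    (w : Fin d → ℝ) (hdist : Function.Injective w) :
    (nthLargest (Finset.univ.image w) k ∈ Finset.univ.image w) ∧
    (2 ≤ k → nthLargest (Finset.univ.image w) k < nthLargest (Finset.univ.image w) (k-1)) := by
  have hd : 1 ≤ d := le_trans hk1 hkd
  have hcard : (Finset.univ.image w).card = d := by
    rw [Finset.card_image_of_injective _ hdist, card_univ, Fintype.card_fin]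
  set L := Finset.sort (Finset.univ.image w) (· ≤ ·) with hL
  have hlen : L.length = d := by rw [hL, Finset.length_sort, hcard]
  have hget : ∀ m (h1 : 1 ≤ m) (h2 : m ≤ d),
      nthLargest (Finset.univ.image w) m = L.get ⟨d - m, by rw [hlen]; omega⟩ := by
    intro m h1 h2
    simp only [nthLargest, ← hL, hcard]
    exact List.getD_eq_getElem _ _ (by rw [hlen]; omega)
  constructor
  · have hm : L.get ⟨d - k, by rw [hlen]; omega⟩ ∈ L := List.get_mem _ _
    rw [hget k hk1 hkd]
    have hsub : ∀ x ∈ L, x ∈ Finset.univ.image w := by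
      intro x hx; rw [hL] at hx; exact (Finset.mem_sort _).1 hx
    exact hsub _ hm
  · intro hk2
    rw [hget k hk1 hkd, hget (k-1) (by omega) (by omega)]
    exact ((Finset.univ.image w).sortedLT_sort).strictMono_get (by simp [Fin.lt_def]; omega)

theorem stmt_9 (d k : ℕ) (hk1 : 1 ≤ k) (hkd : k ≤ d)
    (w : Fin d → ℝ) (hdist : Function.Injective w) (t : ℝ)
    (i : Fin d) (hi : i ∉ topSet d w k)
    (hvalid : ValidSCG d k w t {i} ∅ (topSet d w (k - 1))) :
    MinimalSCG d k w t {i} ∅ (topSet d w (k - 1)) := by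
  obtain ⟨hmem, hstrict⟩ := nth_facts d k hk1 hkd w hdist
  obtain ⟨j, -, hwj⟩ := Finset.mem_image.1 hmem
  have hik : w i < nthLargest (Finset.univ.image w) k := by
    rw [topSet, if_neg (by omega : ¬ k = 0)] at hi
    simpa using hi
  refine ⟨hvalid, Or.inl rfl, Or.inr ?_⟩
  intro x hx
  rw [Finset.mem_singleton] at hx; subst hx
  rintro ⟨-, -, hcov, -⟩
  set C' := insert x (topSet d w (k-1)) with hC'
  have hC : C'.Nonempty := ⟨x, Finset.mem_insert_self _ _⟩
  have h2 : C'.inf' hC w ≤ w j := by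
    refine le_trans (Finset.inf'_le _ (Finset.mem_insert_self _ _)) ?_
    rw [hwj]; exact le_of_lt hik
  have hj' := hcov hC j h2
  simp only [Finset.erase_singleton, Finset.empty_union, Finset.union_empty] at hj'
  rw [hC', Finset.mem_insert] at hj'
  rcases hj' with rfl | hj'
  · exact absurd hwj (by exact ne_of_lt hik)
  · rcases Nat.lt_or_ge k 2 with hk | hk
    · have : k - 1 = 0 := by omega
      rw [topSet, this, if_pos rfl] at hj'
      exact absurd hj' (Finset.notMem_empty _)
    · rw [topSet, if_neg (by omega : ¬ k - 1 = 0), Finset.mem_filter] at hj'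
      have := hj'.2
      rw [hwj] at this
      exact absurd this (not_le.2 (hstrict hk))
end
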